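/- Let P and Q be nonzero integers with D = P^2 - 4Q ≠ 0, let U = U(P,Q) be nondegenerate, and let p be an odd prime with p ∤ D and p ∤ gcd(P,Q). Then for every integer k ≥ 1 one has M^U_{p^k} ≡ (D/p) (mod p^k); that is, there exists an integer t such that M^U_{p^k} = (D/p) + p^k·t, where (D/p) is the Legendre symbol. -/

import Mathlib

/-- Lucas sequence of the first kind: `U 0 = 0`, `U 1 = 1`,
`U (n+2) = P * U (n+1) - Q * U n`. -/
def lucasU (P Q : ℤ) : ℕ → ℤ
  | 0 => 0
  | 1 => 1
  | n + 2 => P * lucasU P Q (n + 1) - Q * lucasU P Q n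

/-- Möbius dual of the Lucas sequence of the first kind:
`M^U_n = ∏_{d ∣ n} U_d ^ μ(n/d)`, as a rational number. -/
def mobiusDualU (P Q : ℤ) (n : ℕ) : ℚ :=
  ∏ d ∈ n.divisors, (lucasU P Q d : ℚ) ^ (ArithmeticFunction.moebius (n / d))

/-! With `α = P + √D` and `β = P - √D` (twice the roots of `X ^ 2 - P X + Q`) one has
`α ^ n - β ^ n = 2 ^ n U_n √D`. Frobenius and Euler's criterion give
`α ^ p ≡ P + (D/p) √D (mod p)`, so `α ^ p ≡ α, β ^ p ≡ β` or `α ^ p ≡ β, β ^ p ≡ α` according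
to the sign of `(D/p)`. Since `x ≡ y (mod p)` implies `x ^ p ^ j ≡ y ^ p ^ j (mod p ^ (j + 1))`,
this lifts to `U_{p^(j+1)} ≡ (D/p) U_{p^j} (mod p ^ (j + 1))`. Hence `p ∤ U_{p^j}`, and as
`U_{p^j} ∣ U_{p^(j+1)}`, `M_{p^(j+1)} = U_{p^(j+1)} / U_{p^j}` is an integer congruent to `(D/p)`
modulo `p ^ (j + 1)`. -/

theorem lucasU_add_two (P Q : ℤ) (n : ℕ) :
    lucasU P Q (n + 2) = P * lucasU P Q (n + 1) - Q * lucasU P Q n := rfl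

theorem lucasU_add_add_one (P Q : ℤ) (m n : ℕ) :
    lucasU P Q (m + n + 1) =
      lucasU P Q (m + 1) * lucasU P Q (n + 1) - Q * lucasU P Q m * lucasU P Q n := by
  induction n using Nat.twoStepInduction generalizing m with
  | zero => simp [lucasU]
  | one => rw [lucasU_add_two]; simp [lucasU]; ring
  | more n ih₂ ih₁ =>
    have h₂ : lucasU P Q (m + (n + 1)) =
        lucasU P Q (m + 1) * lucasU P Q (n + 1) - Q * lucasU P Q m * lucasU P Q n := ih₂ m
    rw [show m + (n + 2) + 1 = m + (n + 1) + 2 by ring, lucasU_add_two P Q (m + (n + 1))]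
    linear_combination P * ih₁ m - Q * h₂ - lucasU P Q (m + 1) * lucasU_add_two P Q (n + 1)
      + Q * lucasU P Q m * lucasU_add_two P Q n

theorem lucasU_dvd_lucasU_of_dvd (P Q : ℤ) {m n : ℕ} (h : m ∣ n) :
    lucasU P Q m ∣ lucasU P Q n := by
  obtain ⟨c, rfl⟩ := h
  cases m with
  | zero => simp
  | succ m =>
    induction c with
    | zero => simp [lucasU]
    | succ c ih =>
      rw [show (m + 1) * (c + 1) = (m + 1) * c + m + 1 by ring, lucasU_add_add_one]
      exact dvd_sub (dvd_mul_left _ _) ((ih.mul_left _).mul_right _)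

namespace Zsqrtd

theorem natCast_mem_nonunits {d : ℤ} {p : ℕ} (hp : p ≠ 1) :
    (p : ℤ√d) ∈ nonunits (ℤ√d) := by
  intro hunit
  have h : ((p : ℤ) : ℤ√d) ∣ ((1 : ℤ) : ℤ√d) := by simpa using hunit.dvd
  rw [intCast_dvd_intCast] at h
  exact hp (Nat.dvd_one.mp (by exact_mod_cast h))

theorem natCast_dvd_pow_sub_mk_legendreSym {d : ℤ} {p : ℕ} [hp : Fact p.Prime] (hp2 : p ≠ 2)
    (z : ℤ√d) : (p : ℤ√d) ∣ z ^ p - ⟨z.re, legendreSym p d * z.im⟩ := by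
  have := CharP.quotient (ℤ√d) p (natCast_mem_nonunits hp.out.ne_one)
  set f := Ideal.Quotient.mk (Ideal.span {(p : ℤ√d)})
  set g : ZMod p →+* ℤ√d ⧸ Ideal.span {(p : ℤ√d)} := ZMod.castHom dvd_rfl _
  have hfg (a : ℤ) : f a = g a := by simp [g]
  have hsqrtd : f sqrtd ^ p = g (legendreSym p d) * f sqrtd := by
    obtain ⟨m, hm⟩ := (hp.out.eq_two_or_odd').resolve_left hp2
    rw [show f sqrtd ^ p = f sqrtd ^ (2 * m + 1) by rw [← hm], pow_succ, pow_mul, sq,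
      ← map_mul, dmuld, hfg, ← map_pow, legendreSym.eq_pow, show p / 2 = m by omega]
  rw [← Ideal.mem_span_singleton, ← Ideal.Quotient.eq_zero_iff_mem, map_sub, sub_eq_zero]
  calc f (z ^ p) = (g z.re + f sqrtd * g z.im) ^ p := by
        rw [map_pow, ← hfg, ← hfg, ← map_mul, ← map_add, ← decompose]
    _ = g (z.re ^ p) + f sqrtd ^ p * g (z.im ^ p) := by
        rw [add_pow_char, mul_pow, map_pow, map_pow]
    _ = g z.re + f sqrtd * g (legendreSym p d * z.im) := by
        rw [ZMod.pow_card, ZMod.pow_card, hsqrtd, map_mul]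
        ring
    _ = f ⟨z.re, legendreSym p d * z.im⟩ := by
        simp only [decompose, map_add, map_mul, hfg, Int.cast_mul]

theorem intCast_dvd_intCast_mul_sqrtd {d : ℤ} (a b : ℤ) :
    (a : ℤ√d) ∣ (b : ℤ√d) * sqrtd ↔ a ∣ b := by
  simp [intCast_dvd]

end Zsqrtd

open Zsqrtd in
theorem lucasU_binet (P Q : ℤ) (n : ℕ) :
    (⟨P, 1⟩ : ℤ√(P ^ 2 - 4 * Q)) ^ n - ⟨P, -1⟩ ^ n =
      ((2 ^ n * lucasU P Q n : ℤ) : ℤ√(P ^ 2 - 4 * Q)) * sqrtd := by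
  set α : ℤ√(P ^ 2 - 4 * Q) := ⟨P, 1⟩
  set β : ℤ√(P ^ 2 - 4 * Q) := ⟨P, -1⟩
  have hsum : α + β = 2 * P := by ext <;> simp [α, β]; ring
  have hprod : α * β = 4 * Q := by ext <;> simp [α, β]; ring
  induction n using Nat.twoStepInduction with
  | zero => simp [lucasU]
  | one => ext <;> simp [α, β, lucasU]
  | more n ih₂ ih₁ =>
    rw [lucasU_add_two]
    push_cast at ih₁ ih₂ ⊢
    linear_combination (α + β) * ih₁ - α * β * ih₂
      + 2 ^ (n + 1) * (lucasU P Q (n + 1) : ℤ√(P ^ 2 - 4 * Q)) * sqrtd * hsum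
      - 2 ^ n * (lucasU P Q n : ℤ√(P ^ 2 - 4 * Q)) * sqrtd * hprod

theorem natCast_pow_succ_dvd_pow_pow_succ_sub {R : Type*} [CommRing R] {p : ℕ} {a b : R}
    (h : (p : R) ∣ a ^ p - b) (j : ℕ) : (p : R) ^ (j + 1) ∣ a ^ p ^ (j + 1) - b ^ p ^ j := by
  simpa [← pow_mul, ← pow_succ'] using dvd_sub_pow_of_dvd_sub h j

theorem pow_succ_dvd_two_pow_mul_lucasU_prime_pow_succ_sub (P Q : ℤ) {p : ℕ} [Fact p.Prime]
    (hp2 : p ≠ 2) (hpD : ¬ (p : ℤ) ∣ P ^ 2 - 4 * Q) (j : ℕ) :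
    (p : ℤ) ^ (j + 1) ∣ 2 ^ p ^ (j + 1) * lucasU P Q (p ^ (j + 1))
      - legendreSym p (P ^ 2 - 4 * Q) * (2 ^ p ^ j * lucasU P Q (p ^ j)) := by
  set D := P ^ 2 - 4 * Q
  set ε := legendreSym p D
  set α : ℤ√D := ⟨P, 1⟩
  set β : ℤ√D := ⟨P, -1⟩
  have hα : (p : ℤ√D) ∣ α ^ p - ⟨P, ε⟩ := by
    simpa [α] using Zsqrtd.natCast_dvd_pow_sub_mk_legendreSym hp2 α
  have hβ : (p : ℤ√D) ∣ β ^ p - ⟨P, -ε⟩ := by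
    simpa [β] using Zsqrtd.natCast_dvd_pow_sub_mk_legendreSym hp2 β
  have key : (p : ℤ√D) ^ (j + 1) ∣ (α ^ p ^ (j + 1) - β ^ p ^ (j + 1))
      - (ε : ℤ√D) * (α ^ p ^ j - β ^ p ^ j) := by
    have hε : ε = 1 ∨ ε = -1 :=
      legendreSym.eq_one_or_neg_one p (by rwa [Ne, ZMod.intCast_zmod_eq_zero_iff_dvd])
    rcases hε with hε | hε <;> rw [hε] at hα hβ ⊢
    · convert dvd_sub (natCast_pow_succ_dvd_pow_pow_succ_sub hα j)
        (natCast_pow_succ_dvd_pow_pow_succ_sub hβ j) using 1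
      ring
    · convert dvd_sub (natCast_pow_succ_dvd_pow_pow_succ_sub hα j)
        (natCast_pow_succ_dvd_pow_pow_succ_sub (b := α) (by simpa using hβ) j) using 1
      push_cast
      ring
  rw [lucasU_binet, lucasU_binet] at key
  rw [← Zsqrtd.intCast_dvd_intCast_mul_sqrtd (d := D)]
  convert key using 1 <;> push_cast <;> ring

theorem pow_succ_dvd_lucasU_prime_pow_succ_sub (P Q : ℤ) {p : ℕ} [hp : Fact p.Prime]
    (hp2 : p ≠ 2) (hpD : ¬ (p : ℤ) ∣ P ^ 2 - 4 * Q) (j : ℕ) :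
    (p : ℤ) ^ (j + 1) ∣ lucasU P Q (p ^ (j + 1))
      - legendreSym p (P ^ 2 - 4 * Q) * lucasU P Q (p ^ j) := by
  have htwo : (p : ℤ) ^ (j + 1) ∣ 2 ^ p ^ (j + 1) - 2 ^ p ^ j :=
    natCast_pow_succ_dvd_pow_pow_succ_sub (Int.ModEq.pow_prime_eq_self hp.out 2).symm.dvd j
  have hcop : IsCoprime ((p : ℤ) ^ (j + 1)) (2 ^ p ^ j) := by
    refine IsCoprime.pow ?_
    exact_mod_cast Nat.isCoprime_iff_coprime.mpr
      ((Nat.coprime_primes hp.out Nat.prime_two).mpr hp2)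
  refine hcop.dvd_of_dvd_mul_left ?_
  convert dvd_sub (pow_succ_dvd_two_pow_mul_lucasU_prime_pow_succ_sub P Q hp2 hpD j)
    (htwo.mul_right (lucasU P Q (p ^ (j + 1)))) using 1
  ring

theorem not_dvd_lucasU_prime_pow (P Q : ℤ) {p : ℕ} [hp : Fact p.Prime] (hp2 : p ≠ 2)
    (hpD : ¬ (p : ℤ) ∣ P ^ 2 - 4 * Q) (j : ℕ) : ¬ (p : ℤ) ∣ lucasU P Q (p ^ j) := by
  induction j with
  | zero => simpa [lucasU] using (by exact_mod_cast hp.out.not_dvd_one : ¬ (p : ℤ) ∣ 1)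
  | succ j ih =>
    intro h
    have hε : IsUnit (legendreSym p (P ^ 2 - 4 * Q)) := by
      refine IsUnit.of_mul_eq_one (legendreSym p (P ^ 2 - 4 * Q)) ?_
      rw [← sq, legendreSym.sq_one p (by rwa [Ne, ZMod.intCast_zmod_eq_zero_iff_dvd])]
    refine ih ((hε.dvd_mul_left).mp ?_)
    simpa using dvd_sub h ((dvd_pow_self _ j.succ_ne_zero).trans
      (pow_succ_dvd_lucasU_prime_pow_succ_sub P Q hp2 hpD j))

theorem mobiusDualU_prime_pow_succ (P Q : ℤ) {p : ℕ} (hp : p.Prime) (j : ℕ) :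
    mobiusDualU P Q (p ^ (j + 1)) = lucasU P Q (p ^ (j + 1)) / lucasU P Q (p ^ j) := by
  have hμ (i : ℕ) (hi : i < j) : ArithmeticFunction.moebius (p ^ (j + 1) / p ^ i) = 0 := by
    rw [Nat.pow_div (by omega) hp.pos, ArithmeticFunction.moebius_apply_prime_pow hp (by omega),
      if_neg (by omega)]
  rw [mobiusDualU, Nat.prod_divisors_prime_pow hp, Finset.prod_range_succ, Finset.prod_range_succ,
    Finset.prod_eq_one fun i hi => by rw [hμ i (Finset.mem_range.mp hi), zpow_zero],
    Nat.pow_div j.le_succ hp.pos, Nat.div_self (pow_pos hp.pos _), Nat.succ_sub j.le_refl,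
    Nat.sub_self, pow_one, ArithmeticFunction.moebius_apply_prime hp,
    ArithmeticFunction.moebius_apply_one, zpow_neg_one, zpow_one, one_mul, div_eq_inv_mul]

theorem stmt_3_general (P Q : ℤ)
    (p : ℕ) (hp : p.Prime) (hodd : Odd p) (hpD : ¬ (p : ℤ) ∣ (P ^ 2 - 4 * Q))
    (k : ℕ) :
    ∃ t : ℤ, mobiusDualU P Q (p ^ k)
      = (jacobiSym (P ^ 2 - 4 * Q) p : ℚ) + (p : ℚ) ^ k * (t : ℚ) := by
  have := Fact.mk hp
  have hp2 : p ≠ 2 := by rintro rfl; exact (by decide : ¬ Odd 2) hodd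
  cases k with
  | zero => exact ⟨1 - jacobiSym (P ^ 2 - 4 * Q) p, by simp [mobiusDualU, lucasU]⟩
  | succ j =>
    set ε := legendreSym p (P ^ 2 - 4 * Q)
    have hx : ¬ (p : ℤ) ∣ lucasU P Q (p ^ j) := not_dvd_lucasU_prime_pow P Q hp2 hpD j
    have hxy : lucasU P Q (p ^ j) ∣ lucasU P Q (p ^ (j + 1)) :=
      lucasU_dvd_lucasU_of_dvd P Q (pow_dvd_pow p j.le_succ)
    obtain ⟨t, ht⟩ : (p : ℤ) ^ (j + 1) * lucasU P Q (p ^ j) ∣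
        lucasU P Q (p ^ (j + 1)) - ε * lucasU P Q (p ^ j) :=
      ((Nat.prime_iff_prime_int.mp hp).coprime_iff_not_dvd.mpr hx).pow_left.mul_dvd
        (pow_succ_dvd_lucasU_prime_pow_succ_sub P Q hp2 hpD j) (dvd_sub hxy (dvd_mul_left _ _))
    refine ⟨t, ?_⟩
    have hx0 : (lucasU P Q (p ^ j) : ℚ) ≠ 0 :=
      Int.cast_ne_zero.mpr fun h => hx (h ▸ dvd_zero _)
    rw [mobiusDualU_prime_pow_succ P Q hp, ← jacobiSym.legendreSym.to_jacobiSym, div_eq_iff hx0]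
    exact_mod_cast (by linear_combination ht :
      lucasU P Q (p ^ (j + 1)) = (ε + (p : ℤ) ^ (j + 1) * t) * lucasU P Q (p ^ j))

theorem stmt_3 (P Q : ℤ) (hP : P ≠ 0) (hQ : Q ≠ 0) (hD : P ^ 2 - 4 * Q ≠ 0)
    (hnd : ∀ m : ℕ, 1 ≤ m → lucasU P Q m ≠ 0)
    (p : ℕ) (hp : p.Prime) (hodd : Odd p) (hpD : ¬ (p : ℤ) ∣ (P ^ 2 - 4 * Q))
    (hpPQ : ¬ p ∣ Int.gcd P Q)
    (k : ℕ) (hk : 1 ≤ k) :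
    ∃ t : ℤ, mobiusDualU P Q (p ^ k)
      = (jacobiSym (P ^ 2 - 4 * Q) p : ℚ) + (p : ℚ) ^ k * (t : ℚ) :=
  stmt_3_general P Q p hp hodd hpD k
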